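/- arXiv:0810.0633 — 7 statements merged into one kernel-verified Lean document; each statement's English description precedes it below -/
import Mathlib

section
/- Let R be a left-total binary relation on U. If C is a connected component of R (an equivalence class of the smallest equivalence containing R), then C^▼ = C^▲ = C, so the rough set of C is exact. -/
variable {U : Type*}

/-- Lower approximation. -/
def low (R : U → U → Prop) (X : Set U) : Set U := {x | ∀ y, R x y → y ∈ X}

/-- Upper approximation. -/
def upp (R : U → U → Prop) (X : Set U) : Set U := {x | ∃ y, R x y ∧ y ∈ X}

section Approximation

variable {R : U → U → Prop} {X : Set U}

theorem subset_low (hfwd : ∀ ⦃x y⦄, R x y → x ∈ X → y ∈ X) : X ⊆ low R X :=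
  fun _ hx _ hxy => hfwd hxy hx

theorem low_subset_upp (hlt : ∀ x, ∃ y, R x y) : low R X ⊆ upp R X := fun x hx =>
  let ⟨y, hxy⟩ := hlt x
  ⟨y, hxy, hx y hxy⟩

theorem upp_subset (hbwd : ∀ ⦃x y⦄, R x y → y ∈ X → x ∈ X) : upp R X ⊆ X :=
  fun _ ⟨_, hxy, hy⟩ => hbwd hxy hy

theorem low_eq_and_upp_eq_of_rel_iff (hlt : ∀ x, ∃ y, R x y)
    (hX : ∀ ⦃x y⦄, R x y → (x ∈ X ↔ y ∈ X)) : low R X = X ∧ upp R X = X := by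
  have hX_low : X ⊆ low R X := subset_low fun _ _ hxy => (hX hxy).mp
  have hlow_upp : low R X ⊆ upp R X := low_subset_upp hlt
  have hupp_X : upp R X ⊆ X := upp_subset fun _ _ hxy => (hX hxy).mpr
  exact ⟨(hlow_upp.trans hupp_X).antisymm hX_low, hupp_X.antisymm (hX_low.trans hlow_upp)⟩

end Approximation

theorem Relation.EqvGen.iff_of_rel {R : U → U → Prop} {a x y : U} (hxy : R x y) :
    Relation.EqvGen R a x ↔ Relation.EqvGen R a y :=
  ⟨fun hx => hx.trans _ _ _ (.rel _ _ hxy), fun hy => hy.trans _ _ _ (.symm _ _ (.rel _ _ hxy))⟩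

theorem component_exact (R : U → U → Prop) (hlt : ∀ x, ∃ y, R x y)
    (C : Set U) (hC : ∃ a, C = {y | Relation.EqvGen R a y}) :
    low R C = C ∧ upp R C = C := by
  obtain ⟨a, rfl⟩ := hC
  exact low_eq_and_upp_eq_of_rel_iff hlt fun _ _ hxy => Relation.EqvGen.iff_of_rel hxy
end

section
/- Let R be a left-total binary relation on U, C a connected component of R, and X ⊆ U. Then (X ∩ C)^▼ = X^▼ ∩ C and (X ∩ C)^▲ = X^▲ ∩ C. -/
variable {U : Type*}

/-! A component `C` is closed under `R` in both directions (`R x y` gives `x ∈ C ↔ y ∈ C`), so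
membership in `C` can be tested at any `R`-successor; this gives `(X ∩ C)^▲ = X^▲ ∩ C`. For the
lower approximation, `(X ∩ C)^▼ = X^▼ ∩ C^▼` and `C^▼ = C`, where `C^▼ ⊆ C` uses that every
point has a successor. -/

lemma Relation.EqvGen.mem_setOf_iff_of_rel (R : U → U → Prop) (a : U) ⦃x y : U⦄ (h : R x y) :
    x ∈ {z | EqvGen R a z} ↔ y ∈ {z | EqvGen R a z} :=
  ⟨fun hx => hx.trans _ _ _ (.rel _ _ h), fun hy => hy.trans _ _ _ ((EqvGen.rel _ _ h).symm _ _)⟩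

lemma low_inter (R : U → U → Prop) (X Y : Set U) : low R (X ∩ Y) = low R X ∩ low R Y :=
  Set.ext fun _ => forall₂_and

section Invariant

variable {R : U → U → Prop} {C : Set U}

lemma low_eq_self_of_invariant (hlt : ∀ x, ∃ y, R x y)
    (hC : ∀ ⦃x y⦄, R x y → (x ∈ C ↔ y ∈ C)) : low R C = C := by
  ext x
  refine ⟨fun hx => ?_, fun hx y hy => (hC hy).mp hx⟩
  obtain ⟨y, hy⟩ := hlt x
  exact (hC hy).mpr (hx y hy)

lemma upp_inter_of_invariant (hC : ∀ ⦃x y⦄, R x y → (x ∈ C ↔ y ∈ C)) (X : Set U) :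
    upp R (X ∩ C) = upp R X ∩ C := by
  ext x
  constructor
  · rintro ⟨y, hy, hyX, hyC⟩
    exact ⟨⟨y, hy, hyX⟩, (hC hy).mpr hyC⟩
  · rintro ⟨⟨y, hy, hyX⟩, hxC⟩
    exact ⟨y, hy, hyX, (hC hy).mp hxC⟩

end Invariant

theorem approx_inter_component (R : U → U → Prop) (hlt : ∀ x, ∃ y, R x y)
    (C : Set U) (hC : ∃ a, C = {y | Relation.EqvGen R a y}) (X : Set U) :
    low R (X ∩ C) = low R X ∩ C ∧ upp R (X ∩ C) = upp R X ∩ C := by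
  obtain ⟨a, rfl⟩ := hC
  have hinv := Relation.EqvGen.mem_setOf_iff_of_rel R a
  exact ⟨by rw [low_inter, low_eq_self_of_invariant hlt hinv], upp_inter_of_invariant hinv X⟩
end

section
/- Let R be a left-total binary relation on U and H a set of connected components of R. Then (⋃H)^▼ = ⋃H = (⋃H)^▲; in particular, the rough set of any union of connected components is exact. -/
variable {U : Type*}

/-! A union of components is closed under `R` in both directions; for such a set `X`,
every `x` has an `R`-successor, which lies in `X` exactly when `x` does, so both
approximations of `X` return `X`. -/

def IsSaturated (R : U → U → Prop) (X : Set U) : Prop :=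
  ∀ ⦃x y⦄, R x y → (x ∈ X ↔ y ∈ X)

theorem isSaturated_setOf_eqvGen (R : U → U → Prop) (a : U) :
    IsSaturated R {y | Relation.EqvGen R a y} := fun _ _ hxy =>
  ⟨fun hx => hx.trans _ _ _ (.rel _ _ hxy),
    fun hy => hy.trans _ _ _ (.symm _ _ (.rel _ _ hxy))⟩

theorem IsSaturated.sUnion {R : U → U → Prop} {H : Set (Set U)}
    (hH : ∀ C ∈ H, IsSaturated R C) : IsSaturated R (⋃₀ H) := fun x y hxy => by
  simp only [Set.mem_sUnion]
  exact exists_congr fun C => and_congr_right fun hC => hH C hC hxy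

theorem IsSaturated.low_eq {R : U → U → Prop} {X : Set U} (hlt : ∀ x, ∃ y, R x y)
    (hX : IsSaturated R X) : low R X = X := by
  ext x
  obtain ⟨y, hxy⟩ := hlt x
  exact ⟨fun hx => (hX hxy).2 (hx y hxy), fun hx z hxz => (hX hxz).1 hx⟩

theorem IsSaturated.upp_eq {R : U → U → Prop} {X : Set U} (hlt : ∀ x, ∃ y, R x y)
    (hX : IsSaturated R X) : upp R X = X := by
  ext x
  obtain ⟨y, hxy⟩ := hlt x
  exact ⟨fun ⟨z, hxz, hz⟩ => (hX hxz).2 hz, fun hx => ⟨y, hxy, (hX hxy).1 hx⟩⟩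

theorem union_components_exact (R : U → U → Prop) (hlt : ∀ x, ∃ y, R x y)
    (H : Set (Set U)) (hH : ∀ C ∈ H, ∃ a, C = {y | Relation.EqvGen R a y}) :
    low R (⋃₀ H) = ⋃₀ H ∧ upp R (⋃₀ H) = ⋃₀ H := by
  have hsat : IsSaturated R (⋃₀ H) := IsSaturated.sUnion fun C hC => by
    obtain ⟨a, rfl⟩ := hH C hC
    exact isSaturated_setOf_eqvGen R a
  exact ⟨hsat.low_eq hlt, hsat.upp_eq hlt⟩
end

section
/- Let R be a quasiorder on a nonempty set U. For any family {X_i : i ∈ I} of subsets of U, there exists a set W ⊆ U such that W^▼ = ⋂_{i∈I} X_i^▼ and W^▲ = ⋂_{i∈I} X_i^▲. That is, the set RS = {(X^▼, X^▲) : X ⊆ U}, ordered coordinatewise, is closed under arbitrary intersections taken in ℘(U) × ℘(U). -/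
/-!
Regard `R` as a preorder. Then `A = ⋂ Xᵢ^▼` is an upper set, `B = ⋂ Xᵢ^▲` a lower set, and no
point of `B \ A` is the only element above itself. This suffices for some `W` to have
`W^▼ = A` and `W^▲ = B`: take `W = A ∪ C ∪ D`, where `C` consists of the points of `B` that see a
point outside `B`, and `D` is one half of a splitting of the upper set `T` of points seeing only
`B \ A` into two cofinal parts. Such a splitting exists in any preorder where no element is alone
above itself: above a maximal cluster take one representative of it, and where there are no
maximal elements choose strict successors `x < f x` and take the points of even height along the
grand orbits of `f`.
-/

variable {U : Type*}

open Function Set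

section

variable {α : Type*}

namespace Function

def grandOrbitSetoid (f : α → α) : Setoid α where
  r x y := ∃ m n : ℕ, f^[m] x = f^[n] y
  iseqv :=
    { refl _ := ⟨0, 0, rfl⟩
      symm := fun ⟨m, n, h⟩ => ⟨n, m, h.symm⟩
      trans := fun ⟨m, n, h⟩ ⟨p, q, h'⟩ =>
        ⟨p + m, n + q, by rw [iterate_add_apply, h, (Commute.iterate_iterate_self f p n).eq, h',
          ← iterate_add_apply]⟩ }

theorem exists_int_height_of_injective_iterate {f : α → α}
    (hf : ∀ x, Injective fun n : ℕ => f^[n] x) : ∃ d : α → ℤ, ∀ x, d (f x) = d x + 1 := by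
  let rep (x : α) : α := (Quotient.mk (grandOrbitSetoid f) x).out
  have hrep (x : α) : ∃ m n : ℕ, f^[m] (rep x) = f^[n] x :=
    Quotient.mk_out (s := grandOrbitSetoid f) x
  choose m n hmn using hrep
  refine ⟨fun x => m x - n x, fun x => ?_⟩
  have hrep_apply : rep (f x) = rep x := congrArg Quotient.out (Quotient.sound ⟨0, 1, rfl⟩)
  have key : m (f x) + n x = m x + (n (f x) + 1) := by
    refine hf x ?_
    dsimp only
    rw [iterate_add_apply, ← hmn x, (Commute.iterate_iterate_self f _ _).eq, ← hrep_apply,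
      hmn (f x), ← iterate_succ_apply, ← iterate_add_apply]
  push_cast
  omega

end Function

theorem exists_isCofinal_and_isCofinal_compl_of_noMaxOrder [Preorder α] [NoMaxOrder α] :
    ∃ D : Set α, IsCofinal D ∧ IsCofinal Dᶜ := by
  choose f hf using fun x : α => exists_gt x
  have hinj (x : α) : Injective fun n => f^[n] x :=
    (strictMono_nat_of_lt_succ fun n => by simpa only [iterate_succ_apply'] using hf _).injective
  obtain ⟨d, hd⟩ := exists_int_height_of_injective_iterate hinj
  have hparity (x : α) : Even (d (f x)) ↔ ¬Even (d x) := by rw [hd, Int.even_add_one]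
  refine ⟨{x | Even (d x)}, fun x => ?_, fun x => ?_⟩
  · by_cases h : Even (d x)
    · exact ⟨x, h, le_rfl⟩
    · exact ⟨f x, (hparity x).2 h, (hf x).le⟩
  · by_cases h : Even (d x)
    · exact ⟨f x, (hparity x).not_left.2 h, (hf x).le⟩
    · exact ⟨x, h, le_rfl⟩

section Preorder

variable [Preorder α]

noncomputable def antisymmRep (x : α) : α :=
  ofAntisymmetrization (· ≤ ·) (toAntisymmetrization (· ≤ ·) x)

theorem antisymmRel_antisymmRep (x : α) : AntisymmRel (· ≤ ·) (antisymmRep x) x :=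
  Quotient.mk_out (s := AntisymmRel.setoid α (· ≤ ·)) x

theorem antisymmRep_eq_of_antisymmRel {x y : α} (h : AntisymmRel (· ≤ ·) x y) :
    antisymmRep x = antisymmRep y :=
  congrArg (ofAntisymmetrization (· ≤ ·)) (Quotient.sound (s := AntisymmRel.setoid α (· ≤ ·)) h)

theorem exists_le_isMax_antisymmRep_ne {m y : α} (hm : IsMax m) (hmy : m ≤ y) (hne : y ≠ m) :
    ∃ z, m ≤ z ∧ IsMax z ∧ antisymmRep z ≠ z := by
  by_cases hrep : antisymmRep m = m
  · refine ⟨y, hmy, hm.mono hmy, ?_⟩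
    rw [antisymmRep_eq_of_antisymmRel ⟨hm hmy, hmy⟩, hrep]
    exact hne.symm
  · exact ⟨m, le_rfl, hm, hrep⟩

theorem exists_isCofinal_and_isCofinal_compl (h : ∀ x : α, ∃ y, x ≤ y ∧ y ≠ x) :
    ∃ D : Set α, IsCofinal D ∧ IsCofinal Dᶜ := by
  let N := {x : α | ∀ y, x ≤ y → ¬IsMax y}
  have hN (x : α) (hx : x ∉ N) : ∃ m, x ≤ m ∧ IsMax m := by
    by_contra h
    exact hx fun y hxy hy => h ⟨y, hxy, hy⟩
  have : NoMaxOrder N := ⟨fun ⟨x, hx⟩ =>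
    let ⟨y, hxy⟩ := not_isMax_iff.1 (hx x le_rfl)
    ⟨⟨y, fun z hyz => hx z (hxy.le.trans hyz)⟩, hxy⟩⟩
  obtain ⟨D, hD, hDc⟩ := exists_isCofinal_and_isCofinal_compl_of_noMaxOrder (α := N)
  refine ⟨(↑) '' D ∪ {x | IsMax x ∧ antisymmRep x = x}, fun x => ?_, fun x => ?_⟩
  · by_cases hx : x ∈ N
    · obtain ⟨y, hyD, hxy⟩ := hD ⟨x, hx⟩
      exact ⟨y, .inl (mem_image_of_mem _ hyD), hxy⟩
    · obtain ⟨m, hxm, hm⟩ := hN x hx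
      have hrep := antisymmRel_antisymmRep m
      exact ⟨antisymmRep m, .inr ⟨hm.mono hrep.ge, antisymmRep_eq_of_antisymmRel hrep⟩,
        hxm.trans hrep.ge⟩
  · by_cases hx : x ∈ N
    · obtain ⟨y, hyD, hxy⟩ := hDc ⟨x, hx⟩
      refine ⟨y, ?_, hxy⟩
      rintro (⟨z, hz, hzy⟩ | ⟨hmax, -⟩)
      · exact hyD (Subtype.ext hzy ▸ hz)
      · exact y.2 y le_rfl hmax
    · obtain ⟨m, hxm, hm⟩ := hN x hx
      obtain ⟨y, hmy, hne⟩ := h m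
      obtain ⟨z, hmz, hz, hzrep⟩ := exists_le_isMax_antisymmRep_ne hm hmy hne
      refine ⟨z, ?_, hxm.trans hmz⟩
      rintro (⟨w, -, rfl⟩ | ⟨-, hrep⟩)
      · exact w.2 _ le_rfl hz
      · exact hzrep hrep

theorem isUpperSet_low (X : Set α) : IsUpperSet (low (· ≤ ·) X) :=
  fun _ _ hxy hx z hyz => hx z (hxy.trans hyz)

theorem isLowerSet_upp (X : Set α) : IsLowerSet (upp (· ≤ ·) X) :=
  fun _ _ hxy ⟨z, hyz, hz⟩ => ⟨z, hxy.trans hyz, hz⟩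

theorem low_subset_upp_s12 (X : Set α) : low (· ≤ ·) X ⊆ upp (· ≤ ·) X :=
  fun x hx => ⟨x, le_rfl, hx x le_rfl⟩

theorem low_eq_and_upp_eq_of_isCofinalFor {A B W : Set α} (hA : IsUpperSet A)
    (hB : IsLowerSet B) (hAW : A ⊆ W) (hWB : W ⊆ B) (hcof : IsCofinalFor B W)
    (hesc : ∀ y ∈ W \ A, ∃ z ∉ W, y ≤ z) :
    low (· ≤ ·) W = A ∧ upp (· ≤ ·) W = B := by
  refine ⟨Subset.antisymm (fun x hx => ?_) fun x hx y hxy => hAW (hA hxy hx),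
    Subset.antisymm (fun x ⟨y, hxy, hy⟩ => hB hxy (hWB hy)) fun x hx => ?_⟩
  · by_contra hxA
    obtain ⟨z, hzW, hxz⟩ := hesc x ⟨hx x le_rfl, hxA⟩
    exact hzW (hx z hxz)
  · obtain ⟨y, hyW, hxy⟩ := hcof hx
    exact ⟨y, hxy, hyW⟩

theorem exists_low_eq_and_upp_eq {A B : Set α} (hA : IsUpperSet A) (hB : IsLowerSet B)
    (hAB : A ⊆ B) (hBA : ∀ x ∈ B \ A, ∃ y, x ≤ y ∧ y ≠ x) :
    ∃ W, low (· ≤ ·) W = A ∧ upp (· ≤ ·) W = B := by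
  let T := {x | ∀ y, x ≤ y → y ∈ B \ A}
  have hT (t : T) : ∃ s : T, t ≤ s ∧ s ≠ t :=
    let ⟨y, hxy, hne⟩ := hBA t (t.2 t le_rfl)
    ⟨⟨y, fun z hyz => t.2 z (hxy.trans hyz)⟩, hxy, fun h => hne (congrArg Subtype.val h)⟩
  obtain ⟨D, hD, hDc⟩ := exists_isCofinal_and_isCofinal_compl hT
  let W := A ∪ {x ∈ B | ∃ y, x ≤ y ∧ y ∉ B} ∪ (↑) '' D
  have hWB : W ⊆ B :=
    union_subset (union_subset hAB (sep_subset _ _))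
      (image_subset_iff.2 fun t _ => (t.2 t le_rfl).1)
  refine ⟨W, low_eq_and_upp_eq_of_isCofinalFor hA hB (subset_union_left.trans subset_union_left)
    hWB (fun x hx => ?_) ?_⟩
  · by_cases hxA : ∃ y ∈ A, x ≤ y
    · obtain ⟨y, hyA, hxy⟩ := hxA
      exact ⟨y, .inl (.inl hyA), hxy⟩
    by_cases hxB : ∃ y, x ≤ y ∧ y ∉ B
    · exact ⟨x, .inl (.inr ⟨hx, hxB⟩), le_rfl⟩
    have hxT : x ∈ T := fun y hxy =>
      ⟨by_contra fun hy => hxB ⟨y, hxy, hy⟩, fun hy => hxA ⟨y, hy, hxy⟩⟩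
    obtain ⟨s, hs, hxs⟩ := hD ⟨x, hxT⟩
    exact ⟨s, .inr (mem_image_of_mem _ hs), hxs⟩
  · rintro y ⟨(hyA | ⟨-, z, hyz, hzB⟩) | ⟨t, -, rfl⟩, hyA'⟩
    · exact absurd hyA hyA'
    · exact ⟨z, fun hz => hzB (hWB hz), hyz⟩
    · obtain ⟨s, hs, hts⟩ := hDc t
      refine ⟨s, ?_, hts⟩
      rintro ((hsA | ⟨-, z, hsz, hzB⟩) | ⟨s', hs', hss'⟩)
      · exact (s.2 s le_rfl).2 hsA
      · exact hzB (s.2 z hsz).1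
      · exact hs (Subtype.ext hss' ▸ hs')

end Preorder

theorem exists_rel_ne_of_mem_upp_of_notMem_low {R : α → α → Prop} {X : Set α} {x : α}
    (hup : x ∈ upp R X) (hlow : x ∉ low R X) : ∃ y, R x y ∧ y ≠ x := by
  obtain ⟨y, hxy, hyX⟩ := hup
  obtain ⟨z, hxz, hzX⟩ : ∃ z, R x z ∧ z ∉ X := by
    by_contra h
    exact hlow fun z hxz => by_contra fun hz => h ⟨z, hxz, hz⟩
  by_cases hyx : y = x
  · exact ⟨z, hxz, fun hzx => hzX (hzx ▸ hyx ▸ hyX)⟩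
  · exact ⟨y, hxy, hyx⟩

end

theorem rough_sets_closed_under_inter_general (R : U → U → Prop)
    (hrefl : Reflexive R) (htrans : Transitive R)
    (I : Type*) (X : I → Set U) :
    ∃ W : Set U, low R W = ⋂ i, low R (X i) ∧ upp R W = ⋂ i, upp R (X i) := by
  let _ : Preorder U := { le := R, le_refl := hrefl, le_trans := fun _ _ _ => @htrans _ _ _ }
  refine exists_low_eq_and_upp_eq (isUpperSet_iInter fun i => isUpperSet_low (X i))
    (isLowerSet_iInter fun i => isLowerSet_upp (X i)) (iInter_mono fun i => low_subset_upp_s12 (X i))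
    fun x ⟨hup, hlow⟩ => ?_
  obtain ⟨i, hi⟩ := not_forall.1 (mem_iInter.not.1 hlow)
  exact exists_rel_ne_of_mem_upp_of_notMem_low (mem_iInter.1 hup i) hi

theorem rough_sets_closed_under_inter (R : U → U → Prop) [Nonempty U]
    (hrefl : Reflexive R) (htrans : Transitive R)
    (I : Type*) (X : I → Set U) :
    ∃ W : Set U, low R W = ⋂ i, low R (X i) ∧ upp R W = ⋂ i, upp R (X i) :=
  rough_sets_closed_under_inter_general R hrefl htrans I X
end

section
/- Let R be a quasiorder on a nonempty set U. For any family {X_i : i ∈ I} of subsets of U, there exists a set V ⊆ U such that V^▼ = ⋃_{i∈I} X_i^▼ and V^▲ = ⋃_{i∈I} X_i^▲. Hence RS = {(X^▼, X^▲) : X ⊆ U} is a complete sublattice of ℘(U) × ℘(U), and in particular a completely distributive complete lattice. -/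
variable {U : Type*}

/-!
Put `A = ⋃ i, (X i)^▼`, `C = ⋃ i, X i` and `T = C^▼ \ A^▲`. The witness is `V = A ∪ (C \ C^▼) ∪ W`,
where `W ⊆ T` is chosen so that `R(x)` meets both `W` and `T \ W` for every `x ∈ T`. Such a `W`
exists because no `x ∈ T` is `R`-maximal in the strong sense `R(x) = {x}`: pick `f x ∈ R(x) ∩ T`
different from `x`; any fixed-point-free self-map admits a set met by every forward orbit and
disjoint from its image under `f`, and that set is `W`.
Then `V^▼ = A`, since `V ⊆ C` and each point of `V \ A` sees a point outside `C` or in `T \ W`;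
and `V^▲ = C^▲`, since each point of `C` sees `A`, lies in `C \ C^▼`, or lies in `T` and sees `W`.
-/

namespace Function

variable {α : Type*} {f : α → α}

def orbitsMeet (f : α → α) : Setoid α where
  r x y := ∃ n m, f^[n] x = f^[m] y
  iseqv.refl _ := ⟨0, 0, rfl⟩
  iseqv.symm := fun ⟨n, m, h⟩ => ⟨m, n, h.symm⟩
  iseqv.trans := fun {x y z} ⟨n, m, hxy⟩ ⟨p, q, hyz⟩ => ⟨p + n, m + q, by
    rw [iterate_add_apply, hxy, ← iterate_add_apply, Nat.add_comm, iterate_add_apply, hyz,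
      ← iterate_add_apply]⟩

theorem exists_iterate_eq_of_mem_periodicPts {x p : α} (hp : p ∈ periodicPts f) {n m : ℕ}
    (h : f^[n] x = f^[m] p) : ∃ k, f^[k] x = p := by
  obtain ⟨k, hk, hper⟩ := mem_periodicPts.1 hp
  have hm : m ≤ k * (m + 1) := by nlinarith
  refine ⟨k * (m + 1) - m + n, ?_⟩
  rw [iterate_add_apply, h, ← iterate_add_apply, Nat.sub_add_cancel hm]
  exact (hper.mul_const _).eq

theorem iterate_mem_periodicPts_of_iterate_eq {x : α} {a b : ℕ} (hab : a < b)
    (h : f^[a] x = f^[b] x) : f^[a] x ∈ periodicPts f :=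
  mk_mem_periodicPts (Nat.sub_pos_of_lt hab) <| by
    rw [IsPeriodicPt, IsFixedPt, ← iterate_add_apply, Nat.sub_add_cancel hab.le, h]

/-- On the orbit class of a single point: a periodic point if there is one, otherwise the even
iterates of the base point. -/
theorem exists_iterate_mem_apply_notMem_of_orbitsMeet (hf : ∀ x, f x ≠ x) (o : α) :
    ∃ V : Set α, (∀ x, orbitsMeet f x o → ∃ n, f^[n] x ∈ V) ∧ ∀ v ∈ V, f v ∉ V := by
  by_cases hper : ∃ k, f^[k] o ∈ periodicPts f
  · obtain ⟨k, hk⟩ := hper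
    refine ⟨{f^[k] o}, fun x ⟨n, m, hx⟩ => ?_, fun v hv hfv => ?_⟩
    · refine exists_iterate_eq_of_mem_periodicPts hk (n := k + n) (m := m) ?_
      rw [iterate_add_apply, hx, ← iterate_add_apply, Nat.add_comm, iterate_add_apply]
    · exact hf v (hfv.trans hv.symm)
  · push Not at hper
    refine ⟨Set.range fun n => f^[2 * n] o, fun x ⟨n, m, hx⟩ => ?_, ?_⟩
    · refine ⟨m % 2 + n, m / 2 + m % 2, ?_⟩
      rw [iterate_add_apply, hx, ← iterate_add_apply,
        show m % 2 + m = 2 * (m / 2 + m % 2) by omega]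
    · rintro _ ⟨n, rfl⟩ ⟨m, hm⟩
      rw [← iterate_succ_apply' f (2 * n)] at hm
      rcases Nat.lt_or_gt_of_ne (show 2 * m ≠ (2 * n).succ by omega) with h | h
      · exact hper _ (iterate_mem_periodicPts_of_iterate_eq h hm)
      · exact hper _ (iterate_mem_periodicPts_of_iterate_eq h hm.symm)

theorem exists_iterate_mem_apply_notMem (hf : ∀ x, f x ≠ x) :
    ∃ V : Set α, (∀ x, ∃ n, f^[n] x ∈ V) ∧ ∀ v ∈ V, f v ∉ V := by
  choose W hW_reach hW_apply using exists_iterate_mem_apply_notMem_of_orbitsMeet hf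
  let base : α → α := fun x => (⟦x⟧ : Quotient (orbitsMeet f)).out
  have base_comp : base ∘ f = base :=
    funext fun x => congrArg Quotient.out (Quotient.sound ⟨0, 1, rfl⟩)
  have base_iterate (n : ℕ) (x : α) : base (f^[n] x) = base x :=
    congrFun (iterate_invariant base_comp n) x
  refine ⟨{v | v ∈ W (base v)}, fun x => ?_, fun v hv hfv => ?_⟩
  · obtain ⟨n, hn⟩ := hW_reach (base x) x ((orbitsMeet f).iseqv.symm (Quotient.mk_out x))
    exact ⟨n, by rwa [Set.mem_ofPred_eq, base_iterate]⟩
  · exact hW_apply (base v) v hv (by rwa [Set.mem_ofPred_eq, ← comp_apply (f := base), base_comp]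
      at hfv)

end Function

section Relation

variable {α : Type*} {R : α → α → Prop}

theorem rel_iterate_of_forall_rel_apply [Std.Refl R] [IsTrans α R] {f : α → α}
    (hf : ∀ x, R x (f x)) (n : ℕ) (x : α) : R x (f^[n] x) := by
  induction n with
  | zero => exact refl_of R x
  | succ n ih => exact trans_of R ih (by rw [Function.iterate_succ_apply']; exact hf _)

theorem exists_subset_rel_mem_and_rel_diff [Std.Refl R] [IsTrans α R] {S : Set α}
    (hS : ∀ x ∈ S, ∃ y ∈ S, R x y ∧ y ≠ x) :
    ∃ W ⊆ S, ∀ x ∈ S, (∃ y ∈ W, R x y) ∧ ∃ y ∈ S \ W, R x y := by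
  choose f hfS hfR hfne using hS
  let g : S → S := fun x => ⟨f x x.2, hfS x x.2⟩
  obtain ⟨V, hV_reach, hV_apply⟩ := Function.exists_iterate_mem_apply_notMem (f := g)
    fun x h => hfne x x.2 (congrArg Subtype.val h)
  have hg_iterate : ∀ n (x : S), R x (g^[n] x).1 := by
    have : Std.Refl fun x y : S => R x y := ⟨fun x => refl_of R x.1⟩
    have : IsTrans S fun x y => R x y := ⟨fun _ _ _ => trans_of R⟩
    exact rel_iterate_of_forall_rel_apply (R := fun x y : S => R x y) fun x => hfR x x.2
  refine ⟨Subtype.val '' V, by simp, fun x hx => ⟨?_, ?_⟩⟩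
  · obtain ⟨n, hn⟩ := hV_reach ⟨x, hx⟩
    exact ⟨_, Set.mem_image_of_mem _ hn, hg_iterate n ⟨x, hx⟩⟩
  · by_cases hxV : ⟨x, hx⟩ ∈ V
    · refine ⟨f x hx, ⟨hfS x hx, ?_⟩, hfR x hx⟩
      rintro ⟨⟨y, hyS⟩, hy, rfl⟩
      exact hV_apply _ hxV hy
    · refine ⟨x, ⟨hx, ?_⟩, refl_of R x⟩
      rintro ⟨⟨y, hyS⟩, hy, rfl⟩
      exact hxV hy

end Relation

section Approximation

variable {R : U → U → Prop} {X Y : Set U} {x y : U}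

theorem low_subset [Std.Refl R] (X : Set U) : low R X ⊆ X :=
  fun x hx => hx x (refl_of R x)

theorem subset_upp [Std.Refl R] (X : Set U) : X ⊆ upp R X :=
  fun x hx => ⟨x, refl_of R x, hx⟩

theorem mem_low_of_rel [IsTrans U R] (hx : x ∈ low R X) (hxy : R x y) : y ∈ low R X :=
  fun z hyz => hx z (trans_of R hxy hyz)

theorem mem_upp_of_rel [IsTrans U R] (hxy : R x y) (hy : y ∈ upp R X) : x ∈ upp R X :=
  let ⟨z, hyz, hz⟩ := hy
  ⟨z, trans_of R hxy hyz, hz⟩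

theorem upp_mono (h : X ⊆ Y) : upp R X ⊆ upp R Y :=
  fun _ ⟨z, hxz, hz⟩ => ⟨z, hxz, h hz⟩

theorem upp_iUnion {I : Type*} (X : I → Set U) : upp R (⋃ i, X i) = ⋃ i, upp R (X i) := by
  ext x
  simp only [upp, Set.mem_iUnion, Set.mem_ofPred_eq]
  exact ⟨fun ⟨y, hxy, i, hy⟩ => ⟨i, y, hxy, hy⟩, fun ⟨i, y, hxy, hy⟩ => ⟨y, hxy, i, hy⟩⟩

theorem exists_rel_ne_of_mem_low_diff_upp [Std.Refl R] [IsTrans U R] {I : Type*} (X : I → Set U)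
    (hy : y ∈ low R (⋃ i, X i) \ upp R (⋃ i, low R (X i))) :
    ∃ z ∈ low R (⋃ i, X i) \ upp R (⋃ i, low R (X i)), R y z ∧ z ≠ y := by
  obtain ⟨hyC, hyA⟩ := hy
  obtain ⟨i, hyi⟩ := Set.mem_iUnion.1 (low_subset _ hyC)
  have hy_low : y ∉ low R (X i) := fun h => hyA (subset_upp _ (Set.mem_iUnion.2 ⟨i, h⟩))
  obtain ⟨z, hyz, hzi⟩ : ∃ z, R y z ∧ z ∉ X i := by simpa [low] using hy_low
  exact ⟨z, ⟨mem_low_of_rel hyC hyz, fun hz => hyA (mem_upp_of_rel hyz hz)⟩, hyz,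
    fun h => hzi (h ▸ hyi)⟩

variable {A C W : Set U}

theorem low_union_diff_union_eq [Std.Refl R] (hA : A ⊆ low R A) (hAC : A ⊆ C) (hWC : W ⊆ C)
    (hW_diff : ∀ x ∈ W, ∃ y ∈ (low R C \ upp R A) \ W, R x y) :
    low R (A ∪ (C \ low R C) ∪ W) = A := by
  refine subset_antisymm (fun x hx => ?_) fun x hxA y hxy => Or.inl (Or.inl (hA hxA y hxy))
  have hVC : A ∪ (C \ low R C) ∪ W ⊆ C :=
    Set.union_subset (Set.union_subset hAC Set.sdiff_subset) hWC
  rcases hx x (refl_of R x) with (hxA | ⟨-, hxC⟩) | hxW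
  · exact hxA
  · obtain ⟨z, hxz, hzC⟩ : ∃ z, R x z ∧ z ∉ C := by simpa [low] using hxC
    exact absurd (hVC (hx z hxz)) hzC
  · obtain ⟨y, ⟨⟨hyC, hyA⟩, hyW⟩, hxy⟩ := hW_diff x hxW
    rcases hx y hxy with (h | ⟨-, h⟩) | h
    · exact absurd (subset_upp A h) hyA
    · exact absurd hyC h
    · exact absurd h hyW

theorem upp_union_diff_union_eq [Std.Refl R] [IsTrans U R] (hAC : A ⊆ C) (hWC : W ⊆ C)
    (hW_mem : ∀ x ∈ low R C \ upp R A, ∃ y ∈ W, R x y) :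
    upp R (A ∪ (C \ low R C) ∪ W) = upp R C := by
  refine subset_antisymm (upp_mono (Set.union_subset (Set.union_subset hAC Set.sdiff_subset) hWC))
    fun x ⟨y, hxy, hyC⟩ => mem_upp_of_rel hxy ?_
  by_cases hyA : y ∈ upp R A
  · exact upp_mono (Set.subset_union_left.trans Set.subset_union_left) hyA
  by_cases hy_low : y ∈ low R C
  · obtain ⟨w, hwW, hyw⟩ := hW_mem y ⟨hy_low, hyA⟩
    exact ⟨w, hyw, Or.inr hwW⟩
  · exact subset_upp _ (Or.inl (Or.inr ⟨hyC, hy_low⟩))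

end Approximation

theorem rough_sets_closed_under_union_general (R : U → U → Prop)
    (hrefl : Reflexive R) (htrans : Transitive R)
    (I : Type*) (X : I → Set U) :
    ∃ V : Set U, low R V = ⋃ i, low R (X i) ∧ upp R V = ⋃ i, upp R (X i) := by
  have : Std.Refl R := ⟨hrefl⟩
  have : IsTrans U R := ⟨htrans⟩
  have hA : ⋃ i, low R (X i) ⊆ low R (⋃ i, low R (X i)) := fun x hx y hxy => by
    obtain ⟨i, hi⟩ := Set.mem_iUnion.1 hx
    exact Set.mem_iUnion.2 ⟨i, mem_low_of_rel hi hxy⟩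
  have hAC : ⋃ i, low R (X i) ⊆ ⋃ i, X i := Set.iUnion_mono fun i => low_subset (X i)
  obtain ⟨W, hWT, hW⟩ := exists_subset_rel_mem_and_rel_diff (R := R) fun y hy =>
    exists_rel_ne_of_mem_low_diff_upp X hy
  have hWC : W ⊆ ⋃ i, X i := hWT.trans (Set.sdiff_subset.trans (low_subset _))
  refine ⟨_, low_union_diff_union_eq hA hAC hWC fun x hx => (hW x (hWT hx)).2, ?_⟩
  rw [← upp_iUnion]
  exact upp_union_diff_union_eq hAC hWC fun x hx => (hW x hx).1

theorem rough_sets_closed_under_union (R : U → U → Prop) [Nonempty U]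
    (hrefl : Reflexive R) (htrans : Transitive R)
    (I : Type*) (X : I → Set U) :
    ∃ V : Set U, low R V = ⋃ i, low R (X i) ∧ upp R V = ⋃ i, upp R (X i) :=
  rough_sets_closed_under_union_general R hrefl htrans I X
end

section
/- Let R be a quasiorder on U. In the complete lattice RS of rough sets, the dual pseudocomplement of A(X) = (X^▼, X^▲) is A(((X^▼)^▽)^c): that is, A(X) ∨ A(((X^▼)^▽)^c) = (U, U), and whenever A(X) ∨ A(Y) = (U, U), we have A(((X^▼)^▽)^c) ≤ A(Y). -/
/-!
Write `Z = ((X^▼)^▽)ᶜ`. Since `(S^▽)ᶜ` is the upper approximation of `Sᶜ` for the converse relation,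
`Z = upp R⁻¹ (X^▼)ᶜ`, and `upp R⁻¹` is left adjoint to `low R`. The lower half of the join condition
`A(X) ∨ A(Y) = (U, U)` says `(X^▼)ᶜ ⊆ Y^▼`, which by adjunction is `Z ⊆ Y`; the unit of the adjunction
gives `(X^▼)ᶜ ⊆ Z^▼`, i.e. `X^▼ ∪ Z^▼ = U`. Reflexivity makes lower approximations lie below upper ones,
which settles the upper components.
-/

variable {U : Type*}

section Approximations

variable (R : U → U → Prop)

theorem compl_low (X : Set U) : (low R X)ᶜ = upp R Xᶜ := by
  ext x
  simp [low, upp]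

theorem gc_upp_flip_low : GaloisConnection (upp (flip R)) (low R) := by
  intro A B
  constructor
  · intro h x hx y hxy
    exact h ⟨x, hxy, hx⟩
  · rintro h y ⟨x, hxy, hx⟩
    exact h hx y hxy

theorem upp_mono_s16 : Monotone (upp R) := by
  rintro A B hAB x ⟨y, hxy, hy⟩
  exact ⟨y, hxy, hAB hy⟩

variable {R}

theorem low_subset_upp_s16 (hrefl : Reflexive R) (X : Set U) : low R X ⊆ upp R X :=
  fun x hx => ⟨x, hrefl x, hx x (hrefl x)⟩

end Approximations

theorem dual_pseudocomplement_general (R : U → U → Prop)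
    (hrefl : Reflexive R) (X : Set U) :
    (low R X ∪ low R (low (fun a b => R b a) (low R X))ᶜ = Set.univ ∧
      upp R X ∪ upp R (low (fun a b => R b a) (low R X))ᶜ = Set.univ) ∧
    ∀ Y : Set U, (low R X ∪ low R Y = Set.univ ∧ upp R X ∪ upp R Y = Set.univ) →
      low R (low (fun a b => R b a) (low R X))ᶜ ⊆ low R Y ∧
      upp R (low (fun a b => R b a) (low R X))ᶜ ⊆ upp R Y := by
  have gc := gc_upp_flip_low R
  have hZ : (low (flip R) (low R X))ᶜ = upp (flip R) (low R X)ᶜ := compl_low (flip R) (low R X)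
  have hlow : low R X ∪ low R (low (flip R) (low R X))ᶜ = Set.univ := by
    rw [← Set.compl_subset_iff_union, hZ]
    exact gc.le_u_l _
  refine ⟨⟨hlow, ?_⟩, fun Y hY => ?_⟩
  · refine Set.eq_univ_of_univ_subset ?_
    rw [← hlow]
    exact Set.union_subset_union (low_subset_upp_s16 hrefl X) (low_subset_upp_s16 hrefl _)
  · have hZY : (low (flip R) (low R X))ᶜ ⊆ Y := by
      rw [hZ]
      exact gc.l_le (Set.compl_subset_iff_union.mpr hY.1)
    exact ⟨gc.monotone_u hZY, upp_mono_s16 R hZY⟩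

theorem dual_pseudocomplement (R : U → U → Prop)
    (hrefl : Reflexive R) (htrans : Transitive R) (X : Set U) :
    (low R X ∪ low R (low (fun a b => R b a) (low R X))ᶜ = Set.univ ∧
      upp R X ∪ upp R (low (fun a b => R b a) (low R X))ᶜ = Set.univ) ∧
    ∀ Y : Set U, (low R X ∪ low R Y = Set.univ ∧ upp R X ∪ upp R Y = Set.univ) →
      low R (low (fun a b => R b a) (low R X))ᶜ ⊆ low R Y ∧
      upp R (low (fun a b => R b a) (low R X))ᶜ ⊆ upp R Y :=
  dual_pseudocomplement_general R hrefl X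
end

section
/- Let R be a quasiorder on U. The complete lattice RS of rough sets determined by R is a Stone lattice (i.e., x* ∨ x** = 1 for all x, where * is the pseudocomplement) if and only if R⁻¹ ∘ R equals the smallest equivalence relation containing R. -/
/-!
Let `E = R⁻¹ ∘ R`. As `R` is reflexive, `E` is reflexive, symmetric and contains `R`, so it is the
equivalence closure of `R` iff it is transitive; and `upp R⁻¹ (upp R X)` is the `E`-neighbourhood
of `X`.

If `E` is transitive, the neighbourhood `C` of `X` is a union of `E`-classes and the neighbourhood
of `Cᶜ` is `Cᶜ` itself, so the Stone identity reduces to `low R Cᶜ ∪ low R C = U` (an `R`-step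
stays inside an `E`-class) and `upp R Cᶜ ∪ upp R C = U` (`upp R` is inflationary).

Conversely, given `E a b` via `z` and `E b c`, let `C` be the neighbourhood of `{a}`. Since `R z a`,
the Stone identity at `z` forces `z ∈ low R (upp R⁻¹ (upp R Cᶜ))ᶜ`, so `b` is not `E`-related to
any point outside `C`; hence `c ∈ C`, i.e. `E a c`.
-/

variable {U : Type*}

open Relation

variable {R : U → U → Prop}

theorem comp_flip_symm {x y : U} (h : Comp (flip R) R x y) : Comp (flip R) R y x :=
  let ⟨z, hzx, hzy⟩ := h
  ⟨z, hzy, hzx⟩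

theorem comp_flip_of_rel (hrefl : Reflexive R) {x y : U} (h : R x y) : Comp (flip R) R x y :=
  ⟨x, hrefl x, h⟩

theorem comp_flip_refl (hrefl : Reflexive R) (x : U) : Comp (flip R) R x x :=
  comp_flip_of_rel hrefl (hrefl x)

theorem eqvGen_of_comp_flip {x y : U} (h : Comp (flip R) R x y) : EqvGen R x y :=
  let ⟨z, hzx, hzy⟩ := h
  (EqvGen.rel z x hzx).symm.trans _ _ _ (EqvGen.rel z y hzy)

theorem comp_flip_iff_eqvGen (hrefl : Reflexive R) (hE : IsTrans U (Comp (flip R) R))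
    (x y : U) : Comp (flip R) R x y ↔ EqvGen R x y := by
  refine ⟨eqvGen_of_comp_flip, fun h => ?_⟩
  induction h with
  | rel a b hab => exact comp_flip_of_rel hrefl hab
  | refl a => exact comp_flip_refl hrefl a
  | symm a b _ ih => exact comp_flip_symm ih
  | trans a b c _ _ ihab ihbc => exact hE.trans _ _ _ ihab ihbc

theorem mem_upp_flip_upp {X : Set U} {x : U} :
    x ∈ upp (fun a b => R b a) (upp R X) ↔ ∃ w ∈ X, Comp (flip R) R x w :=
  ⟨fun ⟨z, hzx, w, hzw, hw⟩ => ⟨w, hw, z, hzx, hzw⟩,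
    fun ⟨w, hw, z, hzx, hzw⟩ => ⟨z, hzx, w, hzw, hw⟩⟩

theorem mem_upp_flip_upp_congr (hE : IsTrans U (Comp (flip R) R)) (X : Set U) {x y : U}
    (hxy : Comp (flip R) R x y) :
    x ∈ upp (fun a b => R b a) (upp R X) ↔ y ∈ upp (fun a b => R b a) (upp R X) := by
  simp only [mem_upp_flip_upp]
  exact ⟨fun ⟨w, hw, hxw⟩ => ⟨w, hw, hE.trans _ _ _ (comp_flip_symm hxy) hxw⟩,
    fun ⟨w, hw, hyw⟩ => ⟨w, hw, hE.trans _ _ _ hxy hyw⟩⟩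

theorem upp_flip_upp_compl (hrefl : Reflexive R) (hE : IsTrans U (Comp (flip R) R))
    (X : Set U) :
    upp (fun a b => R b a) (upp R (upp (fun a b => R b a) (upp R X))ᶜ) =
      (upp (fun a b => R b a) (upp R X))ᶜ := by
  ext x
  rw [mem_upp_flip_upp]
  constructor
  · rintro ⟨w, hw, hxw⟩
    exact mt (mem_upp_flip_upp_congr hE X hxw).1 hw
  · exact fun hx => ⟨x, hx, comp_flip_refl hrefl x⟩

theorem low_compl_union_low {S : Set U} (hS : ∀ x y, R x y → (x ∈ S ↔ y ∈ S)) :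
    low R Sᶜ ∪ low R S = Set.univ := by
  refine Set.eq_univ_of_forall fun x => ?_
  by_cases hx : x ∈ S
  · exact Or.inr fun y hxy => (hS x y hxy).1 hx
  · exact Or.inl fun y hxy => mt (hS x y hxy).2 hx

theorem upp_compl_union_upp (hrefl : Reflexive R) (S : Set U) :
    upp R Sᶜ ∪ upp R S = Set.univ :=
  Set.eq_univ_of_forall fun x => (em (x ∈ S)).elim
    (fun hx => Or.inr ⟨x, hrefl x, hx⟩) (fun hx => Or.inl ⟨x, hrefl x, hx⟩)

theorem isTrans_comp_flip_of_stone (hrefl : Reflexive R)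
    (hstone : ∀ X : Set U,
      low R (upp (fun a b => R b a) (upp R X))ᶜ ∪
        low R (upp (fun a b => R b a)
          (upp R (upp (fun a b => R b a) (upp R X))ᶜ))ᶜ = Set.univ) :
    IsTrans U (Comp (flip R) R) := by
  refine ⟨fun a b c ⟨z, hza, hzb⟩ hbc => ?_⟩
  have hz : z ∈ _ := (hstone {a}).symm ▸ Set.mem_univ z
  rcases hz with hz | hz
  · exact absurd (mem_upp_flip_upp.2 ⟨a, Set.mem_singleton a, comp_flip_refl hrefl a⟩) (hz a hza)
  · by_contra hac
    refine hz b hzb (mem_upp_flip_upp.2 ⟨c, fun hc => hac ?_, hbc⟩)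
    obtain ⟨w, rfl, hcw⟩ := mem_upp_flip_upp.1 hc
    exact comp_flip_symm hcw

theorem stone_iff_general (R : U → U → Prop)
    (hrefl : Reflexive R) :
    (∀ X : Set U,
      low R (upp (fun a b => R b a) (upp R X))ᶜ ∪
        low R (upp (fun a b => R b a)
          (upp R (upp (fun a b => R b a) (upp R X))ᶜ))ᶜ = Set.univ ∧
      upp R (upp (fun a b => R b a) (upp R X))ᶜ ∪
        upp R (upp (fun a b => R b a)
          (upp R (upp (fun a b => R b a) (upp R X))ᶜ))ᶜ = Set.univ) ↔
    (∀ x y, (∃ z, R z x ∧ R z y) ↔ Relation.EqvGen R x y) := by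
  constructor
  · intro hstone
    exact comp_flip_iff_eqvGen hrefl (isTrans_comp_flip_of_stone hrefl fun X => (hstone X).1)
  · intro hE X
    have hEtrans : IsTrans U (Comp (flip R) R) := ⟨fun a b c hab hbc =>
      (hE a c).2 (((hE a b).1 hab).trans _ _ _ ((hE b c).1 hbc))⟩
    rw [upp_flip_upp_compl hrefl hEtrans, compl_compl]
    exact ⟨low_compl_union_low fun x y hxy =>
        mem_upp_flip_upp_congr hEtrans X (comp_flip_of_rel hrefl hxy),
      upp_compl_union_upp hrefl _⟩

theorem stone_iff (R : U → U → Prop) [Nonempty U]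
    (hrefl : Reflexive R) (htrans : Transitive R) :
    (∀ X : Set U,
      low R (upp (fun a b => R b a) (upp R X))ᶜ ∪
        low R (upp (fun a b => R b a)
          (upp R (upp (fun a b => R b a) (upp R X))ᶜ))ᶜ = Set.univ ∧
      upp R (upp (fun a b => R b a) (upp R X))ᶜ ∪
        upp R (upp (fun a b => R b a)
          (upp R (upp (fun a b => R b a) (upp R X))ᶜ))ᶜ = Set.univ) ↔
    (∀ x y, (∃ z, R z x ∧ R z y) ↔ Relation.EqvGen R x y) :=
  stone_iff_general R hrefl
end
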